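/- (Duality of the angular functions of p and q) Define α(s) by cos α(s) := σ(s)/√(2 − 2ζ′(s)²) and sin α(s) := 1/√(2 − 2ζ′(s)²) (these satisfy cos²α + sin²α = 1). Then for all s ∈ (0,L): cos α(s)·N(s) + sin α(s)·B(s) = (σ(s)ζ′(s), ζ′(s)², −1 + ζ′(s)²)/√(1 − ζ′(s)²) and cos α(s)·N(s) − sin α(s)·B(s) = (σ(s)ζ′(s), −1 + ζ′(s)², ζ′(s)²)/√(1 − ζ′(s)²); moreover ⟨(0,0,−1), c′(s)⟩ = ⟨(0,−1,0), c′(s)⟩ = −ζ′(s). In particular the first angular functions of the ruled surfaces p and q are α and −α, and their second angular functions coincide. -/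

import Mathlib

open Real Set

noncomputable section

/-- Euclidean 3-space. -/
abbrev E3 : Type := EuclideanSpace ℝ (Fin 3)

/-- The vector `(x, y, z)` in `ℝ³`. -/
def v3 (x y z : ℝ) : E3 := WithLp.toLp 2 ![x, y, z]

/-- The cross product in `ℝ³`. -/
def cross3 (u w : E3) : E3 :=
  v3 (u 1 * w 2 - u 2 * w 1) (u 2 * w 0 - u 0 * w 2) (u 0 * w 1 - u 1 * w 0)

/-- `σ(s) = √(1 − 2 ζ′(s)²)`. -/
def sig (ζ : ℝ → ℝ) (s : ℝ) : ℝ := Real.sqrt (1 - 2 * (deriv ζ s) ^ 2)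

/-- The crease `c(s) = (∫₀ˢ σ(w) dw, ζ(s), ζ(s))`. -/
def crease (ζ : ℝ → ℝ) (s : ℝ) : E3 :=
  v3 (∫ w in (0:ℝ)..s, sig ζ w) (ζ s) (ζ s)

/-- The crease pattern `γ(s) = (∫₀ˢ √(1 − ζ′(w)²) dw, ζ(s), 0)`. -/
def pattern (ζ : ℝ → ℝ) (s : ℝ) : E3 :=
  v3 (∫ w in (0:ℝ)..s, Real.sqrt (1 - (deriv ζ w) ^ 2)) (ζ s) 0

/-- The curvature `κ(s) = ‖c″(s)‖` of a space curve. -/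
def curv (c : ℝ → E3) (s : ℝ) : ℝ := ‖deriv (deriv c) s‖

/-- The principal normal `N(s) = c″(s)/κ(s)` of a space curve. -/
def nvec (c : ℝ → E3) (s : ℝ) : E3 := (curv c s)⁻¹ • deriv (deriv c) s

/-- The binormal `B(s) = c′(s) × N(s)` of a space curve. -/
def bvec (c : ℝ → E3) (s : ℝ) : E3 := cross3 (deriv c s) (nvec c s)

set_option maxHeartbeats 1000000

lemma v3_0 (x y z : ℝ) : v3 x y z 0 = x := rfl
lemma v3_1 (x y z : ℝ) : v3 x y z 1 = y := rfl
lemma v3_2 (x y z : ℝ) : v3 x y z 2 = z := rfl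
lemma smul_v3 (r x y z : ℝ) : r • v3 x y z = v3 (r*x) (r*y) (r*z) := by
  ext i; fin_cases i <;> rfl
lemma add_v3 (x y z x' y' z' : ℝ) : v3 x y z + v3 x' y' z' = v3 (x+x') (y+y') (z+z') := by
  ext i; fin_cases i <;> rfl
lemma sub_v3 (x y z x' y' z' : ℝ) : v3 x y z - v3 x' y' z' = v3 (x-x') (y-y') (z-z') := by
  ext i; fin_cases i <;> rfl
lemma cross3_v3 (x y z x' y' z' : ℝ) :
    cross3 (v3 x y z) (v3 x' y' z') = v3 (y*z'-z*y') (z*x'-x*z') (x*y'-y*x') := rfl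
lemma v3_congr {x y z x' y' z' : ℝ} (h1 : x = x') (h2 : y = y') (h3 : z = z') :
    v3 x y z = v3 x' y' z' := by rw [h1, h2, h3]
lemma inner_v3 (x y z x' y' z' : ℝ) :
    (inner ℝ (v3 x y z) (v3 x' y' z') : ℝ) = x*x' + y*y' + z*z' := by
  simp [v3, PiLp.inner_apply, Fin.sum_univ_three]
  ring
lemma norm_v3 (x y z : ℝ) : ‖v3 x y z‖ = Real.sqrt (x^2 + y^2 + z^2) := by
  rw [EuclideanSpace.norm_eq]
  simp [v3, Fin.sum_univ_three, sq_abs]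

lemma hasDerivAt_v3 {f g h : ℝ → ℝ} {f' g' h' : ℝ} {s : ℝ}
    (hf : HasDerivAt f f' s) (hg : HasDerivAt g g' s) (hh : HasDerivAt h h' s) :
    HasDerivAt (fun t => v3 (f t) (g t) (h t)) (v3 f' g' h') s := by
  have key : HasDerivAt (fun t => (fun i => v3 (f t) (g t) (h t) i : Fin 3 → ℝ))
      (fun i => v3 f' g' h' i) s := by
    rw [hasDerivAt_pi]
    intro i
    fin_cases i <;> simpa [v3] using ‹_›
  exact (((EuclideanSpace.equiv (Fin 3) ℝ).symm :
      (Fin 3 → ℝ) →L[ℝ] E3).hasFDerivAt).comp_hasDerivAt s key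

/-- duality of the angular functions. With
`cos α = σ/√(2−2ζ′²)` and `sin α = 1/√(2−2ζ′²)`, the conormal vectors
`cos α·N ± sin α·B` of the two ruled pieces are as stated, and the rulings
`(0,0,−1)`, `(0,−1,0)` make the same angle with the tangent; hence the first angular
functions of `p` and `q` are `α` and `−α` and their second angular functions coincide. -/
theorem angular_functions_duality
    (b L : ℝ) (hb : 0 < b) (hL : 0 < L) (ζ : ℝ → ℝ) (hζ : ContDiff ℝ (⊤ : ℕ∞) ζ)
    (hζ0 : ζ 0 = 0) (hζL : ζ L = 0)
    (hslope : ∀ s ∈ Set.Icc (0:ℝ) L, 0 < 1 - 2 * (deriv ζ s) ^ 2)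
    (hrange : ∀ s ∈ Set.Ioo (0:ℝ) L, 0 < ζ s ∧ ζ s < b)
    (hconc : ∀ s ∈ Set.Ioo (0:ℝ) L, deriv (deriv ζ) s < 0) :
    ∀ s ∈ Set.Ioo (0:ℝ) L,
      (sig ζ s / Real.sqrt (2 - 2 * (deriv ζ s) ^ 2)) ^ 2
        + (1 / Real.sqrt (2 - 2 * (deriv ζ s) ^ 2)) ^ 2 = 1 ∧
      (sig ζ s / Real.sqrt (2 - 2 * (deriv ζ s) ^ 2)) • nvec (crease ζ) s
          + (1 / Real.sqrt (2 - 2 * (deriv ζ s) ^ 2)) • bvec (crease ζ) s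
        = (Real.sqrt (1 - (deriv ζ s) ^ 2))⁻¹ •
            v3 (sig ζ s * deriv ζ s) ((deriv ζ s) ^ 2) (-1 + (deriv ζ s) ^ 2) ∧
      (sig ζ s / Real.sqrt (2 - 2 * (deriv ζ s) ^ 2)) • nvec (crease ζ) s
          - (1 / Real.sqrt (2 - 2 * (deriv ζ s) ^ 2)) • bvec (crease ζ) s
        = (Real.sqrt (1 - (deriv ζ s) ^ 2))⁻¹ •
            v3 (sig ζ s * deriv ζ s) (-1 + (deriv ζ s) ^ 2) ((deriv ζ s) ^ 2) ∧
      (inner ℝ (v3 0 0 (-1)) (deriv (crease ζ) s) : ℝ) = -(deriv ζ s) ∧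
      (inner ℝ (v3 0 (-1) 0) (deriv (crease ζ) s) : ℝ) = -(deriv ζ s) := by
  have hd1 : Differentiable ℝ ζ := hζ.differentiable (by simp)
  have hζ' : ContDiff ℝ (⊤:ℕ∞) (deriv ζ) := (contDiff_infty_iff_deriv.mp (hζ.of_le (by simp))).2
  have hcontζ' : Continuous (deriv ζ) := hζ'.continuous
  have hcontsig : Continuous (sig ζ) := by
    unfold sig
    exact (continuous_const.sub ((continuous_const.mul (hcontζ'.pow 2)))).sqrt
  have hderC : ∀ t : ℝ, HasDerivAt (crease ζ)
      (v3 (sig ζ t) (deriv ζ t) (deriv ζ t)) t := by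
    intro t
    have h1 : HasDerivAt (fun u => ∫ w in (0:ℝ)..u, sig ζ w) (sig ζ t) t :=
      intervalIntegral.integral_hasDerivAt_right
        (hcontsig.intervalIntegrable _ _)
        (hcontsig.aestronglyMeasurable.stronglyMeasurableAtFilter)
        hcontsig.continuousAt
    exact hasDerivAt_v3 h1 (hd1 t).hasDerivAt (hd1 t).hasDerivAt
  have derC_eq : deriv (crease ζ) = fun t => v3 (sig ζ t) (deriv ζ t) (deriv ζ t) :=
    funext fun t => (hderC t).deriv
  intro s hs
  set A := deriv ζ s with hAdef
  set Z := deriv (deriv ζ) s with hZdef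
  set S := sig ζ s with hSdef
  have hslopes : 0 < 1 - 2 * A ^ 2 := hslope s ⟨hs.1.le, hs.2.le⟩
  have hA1 : A ^ 2 < 1 := by nlinarith [sq_nonneg A]
  have hZneg : Z < 0 := hconc s hs
  have hZne : Z ≠ 0 := ne_of_lt hZneg
  have hSpos : 0 < S := Real.sqrt_pos.mpr hslopes
  have hSne : S ≠ 0 := ne_of_gt hSpos
  have hS2 : S ^ 2 = 1 - 2 * A ^ 2 := Real.sq_sqrt hslopes.le
  have h2 : (Real.sqrt 2) ^ 2 = 2 := Real.sq_sqrt (by norm_num)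
  have h2pos : (0:ℝ) < Real.sqrt 2 := Real.sqrt_pos.mpr (by norm_num)
  have h2ne : Real.sqrt 2 ≠ 0 := ne_of_gt h2pos
  set T := Real.sqrt (1 - A ^ 2) with hTdef
  have hTpos : 0 < T := Real.sqrt_pos.mpr (by linarith)
  have hTne : T ≠ 0 := ne_of_gt hTpos
  have hT2 : T ^ 2 = 1 - A ^ 2 := Real.sq_sqrt (by linarith)
  have hU : Real.sqrt (2 - 2 * A ^ 2) = Real.sqrt 2 * T := by
    rw [show (2:ℝ) - 2 * A ^ 2 = 2 * (1 - A ^ 2) by ring,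
      Real.sqrt_mul (by norm_num)]
  -- second derivative
  have hZ' : HasDerivAt (deriv ζ) Z s :=
    (hζ'.differentiable (by simp) s).hasDerivAt
  have hg : HasDerivAt (fun t => 1 - 2 * (deriv ζ t) ^ 2) (-(4 * A * Z)) s := by
    have := ((hZ'.pow 2).const_mul (2:ℝ)).const_sub 1
    refine this.congr_deriv ?_
    ring
  have hsig : HasDerivAt (sig ζ) (-(2 * A * Z) / S) s := by
    have h := (Real.hasDerivAt_sqrt (ne_of_gt hslopes)).comp s hg
    refine h.congr_deriv ?_
    rw [show Real.sqrt (1 - 2 * A ^ 2) = S from rfl]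
    field_simp
    ring
  have hder2 : HasDerivAt (deriv (crease ζ)) (v3 (-(2 * A * Z) / S) Z Z) s := by
    rw [derC_eq]
    exact hasDerivAt_v3 hsig hZ' hZ'
  have dd : deriv (deriv (crease ζ)) s = v3 (-(2 * A * Z) / S) Z Z := hder2.deriv
  -- curvature
  have hκ : curv (crease ζ) s = Real.sqrt 2 * (-Z) / S := by
    have key : (-(2 * A * Z) / S) ^ 2 + Z ^ 2 + Z ^ 2
        = (Real.sqrt 2 * (-Z) / S) ^ 2 := by
      field_simp
      linear_combination (2*Z^2)*hS2 - Z^2*h2 + (Z^2-1)*h2 + (2*(1-Z^2))*hS2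
    unfold curv
    rw [dd, norm_v3, key, Real.sqrt_sq
      (le_of_lt (div_pos (mul_pos h2pos (neg_pos.mpr hZneg)) hSpos))]
  -- normal
  have hN : nvec (crease ζ) s
      = v3 (Real.sqrt 2 * A) (-(S / Real.sqrt 2)) (-(S / Real.sqrt 2)) := by
    unfold nvec
    rw [dd, hκ, smul_v3]
    refine v3_congr ?_ ?_ ?_
    · field_simp
      linear_combination (-(A*Z*S))*h2 + (A*Z*S - A)*h2
    · field_simp
    · field_simp
  -- binormal
  have hB : bvec (crease ζ) s = v3 0 (1 / Real.sqrt 2) (-(1 / Real.sqrt 2)) := by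
    unfold bvec
    rw [hN, derC_eq]
    show cross3 (v3 S A A) _ = _
    rw [cross3_v3]
    refine v3_congr (by ring) ?_ ?_
    · field_simp
      linear_combination A^2*h2 + hS2
    · field_simp
      linear_combination (-1:ℝ)*hS2 - A^2*h2
  have hdC : deriv (crease ζ) s = v3 S A A := by rw [derC_eq]
  refine ⟨?_, ?_, ?_, ?_, ?_⟩
  · rw [hU, div_pow, div_pow, hS2, mul_pow, h2, hT2]
    rw [← add_div, div_eq_one_iff_eq (by nlinarith)]
    ring
  · rw [hU, hN, hB, smul_v3, smul_v3, add_v3, smul_v3]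
    refine v3_congr ?_ ?_ ?_
    · field_simp
      ring
    · field_simp
      linear_combination (-(Real.sqrt 2)^2*T^2)*hS2 + (-(A^2)*(Real.sqrt 2)^2*T^2)*h2 + (S^2*T^2 - T^2 - A^2 + T^2*A^2*((Real.sqrt 2)^2+2))*h2 + (2*T^2-1)*hS2
    · field_simp
      linear_combination (-(Real.sqrt 2)^2*T^2)*hS2 + ((1-A^2)*(Real.sqrt 2)^2*T^2)*h2 + (S^2*T^2 + 1 + T^2 - A^2 + ((Real.sqrt 2)^2+2)*(T^2*A^2 - T^2))*h2 + (2*T^2-1)*hS2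
  · rw [hU, hN, hB, smul_v3, smul_v3, sub_v3, smul_v3]
    refine v3_congr ?_ ?_ ?_
    · field_simp
      ring
    · field_simp
      linear_combination (-(Real.sqrt 2)^2*T^2)*hS2 + ((1-A^2)*(Real.sqrt 2)^2*T^2)*h2 + (S^2*T^2 + 1 + T^2 - A^2 + ((Real.sqrt 2)^2+2)*(T^2*A^2 - T^2))*h2 + (2*T^2-1)*hS2
    · field_simp
      linear_combination (-(Real.sqrt 2)^2*T^2)*hS2 + (-(A^2)*(Real.sqrt 2)^2*T^2)*h2 + (S^2*T^2 - T^2 - A^2 + T^2*A^2*((Real.sqrt 2)^2+2))*h2 + (2*T^2-1)*hS2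
  · rw [hdC, inner_v3]; ring
  · rw [hdC, inner_v3]; ring
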